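/- Let H₁, H₂, H₃ be complex Hilbert spaces and A ∈ B(H₁), B ∈ B(H₂,H₁), C ∈ B(H₂), D ∈ B(H₃,H₂), E ∈ B(H₃), and suppose the 2×2 operator matrices [[A, B],[B*, C]] and [[C, D],[D*, E]] are positive definite. For X ∈ B(H₃,H₁) let M(X) = [[A, B, X],[B*, C, D],[X*, D*, E]] on H₁ ⊕ H₂ ⊕ H₃. Then X₀ := B C⁻¹ D is the unique X ∈ B(H₃,H₁) such that M(X) is positive definite and the (1,3) entry of the 3×3 operator matrix M(X)⁻¹ is zero. -/

import Mathlib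

/-!
With `w = C⁻¹ D z`, the quadratic form of `M(B C⁻¹ D)` at `(x, y, z)` is the form of
`[[A, B], [B*, C]]` at `(x, y + w)` plus the form of `[[C, D], [D*, E]]` at `(-w, z)`, so
`M(B C⁻¹ D)` is positive definite. Its inverse is explicit in terms of `C⁻¹` and of the Schur
complements `A - B C⁻¹ B*` and `E - D* C⁻¹ D` (invertible since they are coercive), and its
`(1,3)` entry vanishes.

Conversely, if `N = M(X)⁻¹` has `N₁₃ = 0`, the first row of `N M(X) = 1` gives
`N₁₁ X = N₁₁ B C⁻¹ D`. The first column `v` of `N` applied to `u` solves `M(X) v = (u, 0, 0)`,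
so the form of `M(X)` at `v` is `re ⟪u, N₁₁ u⟫`; hence `N₁₁ u = 0` forces `v = 0` and `u = 0`,
and `N₁₁` is injective.
-/

noncomputable section

open ContinuousLinearMap

variable {H₁ H₂ H₃ : Type*}
  [NormedAddCommGroup H₁] [InnerProductSpace ℂ H₁] [CompleteSpace H₁]
  [NormedAddCommGroup H₂] [InnerProductSpace ℂ H₂] [CompleteSpace H₂]
  [NormedAddCommGroup H₃] [InnerProductSpace ℂ H₃] [CompleteSpace H₃]

/-- Positive definiteness of the 2×2 operator matrix `[[A, B], [B*, C]]` regarded as an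
operator on the Hilbert-space direct sum. -/
def Pos2 {E F : Type*} [NormedAddCommGroup E] [InnerProductSpace ℂ E] [CompleteSpace E]
    [NormedAddCommGroup F] [InnerProductSpace ℂ F] [CompleteSpace F]
    (A : E →L[ℂ] E) (B : F →L[ℂ] E) (C : F →L[ℂ] F) : Prop :=
  IsSelfAdjoint A ∧ IsSelfAdjoint C ∧
  ∃ ε : ℝ, 0 < ε ∧ ∀ (x : E) (y : F),
    ε * (‖x‖ ^ 2 + ‖y‖ ^ 2) ≤
      (inner ℂ (A x) x : ℂ).re + 2 * (inner ℂ (B y) x : ℂ).re + (inner ℂ (C y) y : ℂ).re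

/-- Positive definiteness of `M(X) = [[A,B,X],[B*,C,D],[X*,D*,E]]` on `H₁ ⊕ H₂ ⊕ H₃`. -/
def Pos3 (A : H₁ →L[ℂ] H₁) (B : H₂ →L[ℂ] H₁) (X : H₃ →L[ℂ] H₁)
    (C : H₂ →L[ℂ] H₂) (D : H₃ →L[ℂ] H₂) (E : H₃ →L[ℂ] H₃) : Prop :=
  IsSelfAdjoint A ∧ IsSelfAdjoint C ∧ IsSelfAdjoint E ∧
  ∃ ε : ℝ, 0 < ε ∧ ∀ (x : H₁) (y : H₂) (z : H₃),
    ε * (‖x‖ ^ 2 + ‖y‖ ^ 2 + ‖z‖ ^ 2) ≤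
      (inner ℂ (A x) x : ℂ).re + (inner ℂ (C y) y : ℂ).re + (inner ℂ (E z) z : ℂ).re
      + 2 * (inner ℂ (B y) x : ℂ).re + 2 * (inner ℂ (X z) x : ℂ).re + 2 * (inner ℂ (D z) y : ℂ).re

/-- The 3×3 operator matrix `N = (N i j)` is a two-sided inverse of
`M(X) = [[A,B,X],[B*,C,D],[X*,D*,E]]`, written out entrywise. -/
def Inv3 (A : H₁ →L[ℂ] H₁) (B : H₂ →L[ℂ] H₁) (X : H₃ →L[ℂ] H₁)
    (C : H₂ →L[ℂ] H₂) (D : H₃ →L[ℂ] H₂) (E : H₃ →L[ℂ] H₃)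
    (N11 : H₁ →L[ℂ] H₁) (N12 : H₂ →L[ℂ] H₁) (N13 : H₃ →L[ℂ] H₁)
    (N21 : H₁ →L[ℂ] H₂) (N22 : H₂ →L[ℂ] H₂) (N23 : H₃ →L[ℂ] H₂)
    (N31 : H₁ →L[ℂ] H₃) (N32 : H₂ →L[ℂ] H₃) (N33 : H₃ →L[ℂ] H₃) : Prop :=
  -- M(X) ∘ N = I
  (A ∘L N11 + B ∘L N21 + X ∘L N31 = 1) ∧
  (A ∘L N12 + B ∘L N22 + X ∘L N32 = 0) ∧
  (A ∘L N13 + B ∘L N23 + X ∘L N33 = 0) ∧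
  (adjoint B ∘L N11 + C ∘L N21 + D ∘L N31 = 0) ∧
  (adjoint B ∘L N12 + C ∘L N22 + D ∘L N32 = 1) ∧
  (adjoint B ∘L N13 + C ∘L N23 + D ∘L N33 = 0) ∧
  (adjoint X ∘L N11 + adjoint D ∘L N21 + E ∘L N31 = 0) ∧
  (adjoint X ∘L N12 + adjoint D ∘L N22 + E ∘L N32 = 0) ∧
  (adjoint X ∘L N13 + adjoint D ∘L N23 + E ∘L N33 = 1) ∧
  -- N ∘ M(X) = I
  (N11 ∘L A + N12 ∘L adjoint B + N13 ∘L adjoint X = 1) ∧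
  (N11 ∘L B + N12 ∘L C + N13 ∘L adjoint D = 0) ∧
  (N11 ∘L X + N12 ∘L D + N13 ∘L E = 0) ∧
  (N21 ∘L A + N22 ∘L adjoint B + N23 ∘L adjoint X = 0) ∧
  (N21 ∘L B + N22 ∘L C + N23 ∘L adjoint D = 1) ∧
  (N21 ∘L X + N22 ∘L D + N23 ∘L E = 0) ∧
  (N31 ∘L A + N32 ∘L adjoint B + N33 ∘L adjoint X = 0) ∧
  (N31 ∘L B + N32 ∘L C + N33 ∘L adjoint D = 0) ∧
  (N31 ∘L X + N32 ∘L D + N33 ∘L E = 1)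

/-- `M(X)` is positive definite and the `(1,3)` entry of `M(X)⁻¹` is zero. -/
def GoodCompletion (A : H₁ →L[ℂ] H₁) (B : H₂ →L[ℂ] H₁) (C : H₂ →L[ℂ] H₂)
    (D : H₃ →L[ℂ] H₂) (E : H₃ →L[ℂ] H₃) (X : H₃ →L[ℂ] H₁) : Prop :=
  Pos3 A B X C D E ∧
  ∃ (N11 : H₁ →L[ℂ] H₁) (N12 : H₂ →L[ℂ] H₁) (N13 : H₃ →L[ℂ] H₁)
    (N21 : H₁ →L[ℂ] H₂) (N22 : H₂ →L[ℂ] H₂) (N23 : H₃ →L[ℂ] H₂)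
    (N31 : H₁ →L[ℂ] H₃) (N32 : H₂ →L[ℂ] H₃) (N33 : H₃ →L[ℂ] H₃),
      Inv3 A B X C D E N11 N12 N13 N21 N22 N23 N31 N32 N33 ∧ N13 = 0

open scoped InnerProductSpace

lemma comp_comp_of_comp_eq_one {F G : Type*} [NormedAddCommGroup F] [NormedSpace ℂ F]
    [NormedAddCommGroup G] [NormedSpace ℂ G] {T U : F →L[ℂ] F} (h : T ∘L U = 1)
    (f : G →L[ℂ] F) : T ∘L U ∘L f = f := by
  rw [← comp_assoc, h, one_def, id_comp]

section BlockForm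

variable {U V W : Type*} [NormedAddCommGroup U] [InnerProductSpace ℂ U]
  [NormedAddCommGroup V] [InnerProductSpace ℂ V] [NormedAddCommGroup W] [InnerProductSpace ℂ W]

lemma re_inner_comm (x y : U) : (⟪x, y⟫_ℂ).re = (⟪y, x⟫_ℂ).re := by
  rw [← inner_conj_symm y x, Complex.conj_re]

def blockForm2 (A : U →L[ℂ] U) (B : V →L[ℂ] U) (C : V →L[ℂ] V) (x : U) (y : V) : ℝ :=
  (⟪A x, x⟫_ℂ).re + 2 * (⟪B y, x⟫_ℂ).re + (⟪C y, y⟫_ℂ).re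

def blockForm3 (A : U →L[ℂ] U) (B : V →L[ℂ] U) (X : W →L[ℂ] U)
    (C : V →L[ℂ] V) (D : W →L[ℂ] V) (E : W →L[ℂ] W) (x : U) (y : V) (z : W) : ℝ :=
  (⟪A x, x⟫_ℂ).re + (⟪C y, y⟫_ℂ).re + (⟪E z, z⟫_ℂ).re
    + 2 * (⟪B y, x⟫_ℂ).re + 2 * (⟪X z, x⟫_ℂ).re + 2 * (⟪D z, y⟫_ℂ).re

lemma blockForm3_eq_blockForm2_add {A : U →L[ℂ] U} {B : V →L[ℂ] U} {X : W →L[ℂ] U}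
    {C : V →L[ℂ] V} {D : W →L[ℂ] V} {E : W →L[ℂ] W} (hC : (C : V →ₗ[ℂ] V).IsSymmetric)
    {x : U} {y : V} {z : W} {w : V} (hw : C w = D z) (hX : X z = B w) :
    blockForm3 A B X C D E x y z = blockForm2 A B C x (y + w) + blockForm2 C D E (-w) z := by
  have hCy : (⟪C y, w⟫_ℂ).re = (⟪D z, y⟫_ℂ).re := by
    rw [← hw, re_inner_comm]
    exact congrArg Complex.re (hC w y).symm
  simp only [blockForm3, blockForm2, hX, map_add, map_neg, inner_add_left, inner_add_right,
    inner_neg_left, inner_neg_right, hw, Complex.add_re, Complex.neg_re, hCy]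
  ring

variable [CompleteSpace U] [CompleteSpace V] [CompleteSpace W]

lemma re_inner_adjoint_left (T : U →L[ℂ] V) (x : V) (y : U) :
    (⟪adjoint T x, y⟫_ℂ).re = (⟪T y, x⟫_ℂ).re := by
  rw [adjoint_inner_left, re_inner_comm]

lemma blockForm3_eq_re_inner_apply (A : U →L[ℂ] U) (B : V →L[ℂ] U) (X : W →L[ℂ] U)
    (C : V →L[ℂ] V) (D : W →L[ℂ] V) (E : W →L[ℂ] W) (x : U) (y : V) (z : W) :
    blockForm3 A B X C D E x y z =
      (⟪A x + B y + X z, x⟫_ℂ).re + (⟪adjoint B x + C y + D z, y⟫_ℂ).re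
        + (⟪adjoint X x + adjoint D y + E z, z⟫_ℂ).re := by
  simp only [blockForm3, inner_add_left, Complex.add_re, re_inner_adjoint_left]
  ring

lemma isUnit_of_coercive (T : U →L[ℂ] U) {ε : ℝ} (hε : 0 < ε)
    (h : ∀ x, ε * ‖x‖ ^ 2 ≤ (⟪T x, x⟫_ℂ).re) : IsUnit T :=
  isUnit_of_forall_le_norm_inner_map T (c := ⟨ε, hε.le⟩) hε fun x =>
    calc ‖x‖ ^ 2 * ε = ε * ‖x‖ ^ 2 := mul_comm _ _
      _ ≤ (⟪T x, x⟫_ℂ).re := h x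
      _ ≤ ‖⟪T x, x⟫_ℂ‖ := Complex.re_le_norm _

variable {A : U →L[ℂ] U} {B : V →L[ℂ] U} {C : V →L[ℂ] V}

lemma blockForm2_swap (x : U) (y : V) :
    blockForm2 C (adjoint B) A y x = blockForm2 A B C x y := by
  simp only [blockForm2, re_inner_adjoint_left]
  ring

lemma blockForm2_neg_schur {C' : V →L[ℂ] V} (hC : C ∘L C' = 1) (x : U) :
    blockForm2 A B C x (-(C' (adjoint B x))) = (⟪(A - B ∘L C' ∘L adjoint B) x, x⟫_ℂ).re := by
  have hCC' : C (C' (adjoint B x)) = adjoint B x := by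
    simpa using congr($hC (adjoint B x))
  simp only [blockForm2, map_neg, inner_neg_left, inner_neg_right, neg_neg, hCC',
    re_inner_adjoint_left, sub_apply, comp_apply, inner_sub_left, Complex.neg_re, Complex.sub_re]
  ring

lemma Pos2.swap (h : Pos2 A B C) : Pos2 C (adjoint B) A := by
  obtain ⟨hA, hC, ε, hε, hq⟩ := h
  refine ⟨hC, hA, ε, hε, fun y x => ?_⟩
  rw [add_comm]
  exact (hq x y).trans_eq (blockForm2_swap x y).symm

lemma Pos2.isUnit_left (h : Pos2 A B C) : IsUnit A := by
  obtain ⟨-, -, ε, hε, hq⟩ := h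
  exact isUnit_of_coercive A hε fun x => by simpa using hq x 0

lemma Pos2.isUnit_right (h : Pos2 A B C) : IsUnit C :=
  h.swap.isUnit_left

lemma Pos2.isUnit_schur {C' : V →L[ℂ] V} (h : Pos2 A B C) (hC : C ∘L C' = 1) :
    IsUnit (A - B ∘L C' ∘L adjoint B) := by
  obtain ⟨-, -, ε, hε, hq⟩ := h
  refine isUnit_of_coercive _ hε fun x => ?_
  rw [← blockForm2_neg_schur hC]
  calc ε * ‖x‖ ^ 2 ≤ ε * (‖x‖ ^ 2 + ‖-(C' (adjoint B x))‖ ^ 2) := by gcongr; simp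
    _ ≤ _ := hq x _

end BlockForm

section BlockMatrix3

variable {A : H₁ →L[ℂ] H₁} {B : H₂ →L[ℂ] H₁} {X : H₃ →L[ℂ] H₁}
  {C : H₂ →L[ℂ] H₂} {D : H₃ →L[ℂ] H₂} {E : H₃ →L[ℂ] H₃}

lemma pos3_of_pos2 {C' : H₂ →L[ℂ] H₂} (h₁ : Pos2 A B C) (h₂ : Pos2 C D E)
    (hC : C ∘L C' = 1) : Pos3 A B (B ∘L C' ∘L D) C D E := by
  obtain ⟨hA, hCsa, ε₁, hε₁, hq₁⟩ := h₁
  obtain ⟨-, hE, ε₂, hε₂, hq₂⟩ := h₂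
  set m := min ε₁ ε₂
  have hm : 0 ≤ m := le_min hε₁.le hε₂.le
  refine ⟨hA, hCsa, hE, m / 2, by positivity, fun x y z => ?_⟩
  set w := C' (D z)
  have hw : C w = D z := by simpa using congr($hC (D z))
  have hy : ‖y‖ ^ 2 ≤ 2 * (‖y + w‖ ^ 2 + ‖-w‖ ^ 2) :=
    calc ‖y‖ ^ 2 = ‖y + w + -w‖ ^ 2 := by rw [add_neg_cancel_right]
      _ ≤ (‖y + w‖ + ‖-w‖) ^ 2 := by gcongr; exact norm_add_le _ _
      _ ≤ _ := add_sq_le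
  calc m / 2 * (‖x‖ ^ 2 + ‖y‖ ^ 2 + ‖z‖ ^ 2)
      ≤ m * (‖x‖ ^ 2 + ‖y + w‖ ^ 2) + m * (‖-w‖ ^ 2 + ‖z‖ ^ 2) := by
        linarith [mul_le_mul_of_nonneg_left hy hm, mul_nonneg hm (sq_nonneg ‖x‖),
          mul_nonneg hm (sq_nonneg ‖z‖)]
    _ ≤ ε₁ * (‖x‖ ^ 2 + ‖y + w‖ ^ 2) + ε₂ * (‖-w‖ ^ 2 + ‖z‖ ^ 2) := by
        gcongr
        exacts [min_le_left _ _, min_le_right _ _]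
    _ ≤ blockForm2 A B C x (y + w) + blockForm2 C D E (-w) z :=
        add_le_add (hq₁ x (y + w)) (hq₂ (-w) z)
    _ = blockForm3 A B (B ∘L C' ∘L D) C D E x y z :=
        (blockForm3_eq_blockForm2_add hCsa.isSymmetric hw rfl).symm

lemma inv3_of_schur {C' : H₂ →L[ℂ] H₂} {S₁ S₁' : H₁ →L[ℂ] H₁} {S₂ S₂' : H₃ →L[ℂ] H₃}
    (hC : C ∘L C' = 1) (hC' : C' ∘L C = 1) (hC'sa : IsSelfAdjoint C')
    (hS₁ : S₁ ∘L S₁' = 1) (hS₁' : S₁' ∘L S₁ = 1) (hS₂ : S₂ ∘L S₂' = 1) (hS₂' : S₂' ∘L S₂ = 1)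
    (hA : A = S₁ + B ∘L C' ∘L adjoint B) (hE : E = S₂ + adjoint D ∘L C' ∘L D) :
    Inv3 A B (B ∘L C' ∘L D) C D E
      S₁' (-(S₁' ∘L B ∘L C')) 0
      (-(C' ∘L adjoint B ∘L S₁'))
      (C' + C' ∘L adjoint B ∘L S₁' ∘L B ∘L C' + C' ∘L D ∘L S₂' ∘L adjoint D ∘L C')
      (-(C' ∘L D ∘L S₂'))
      0 (-(S₂' ∘L adjoint D ∘L C')) S₂' := by
  subst hA hE
  have hX : adjoint (B ∘L C' ∘L D) = adjoint D ∘L C' ∘L adjoint B := by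
    rw [adjoint_comp, adjoint_comp, hC'sa.adjoint_eq, comp_assoc]
  refine ⟨?_, ?_, ?_, ?_, ?_, ?_, ?_, ?_, ?_, ?_, ?_, ?_, ?_, ?_, ?_, ?_, ?_, ?_⟩ <;>
  · simp only [hX, comp_neg, neg_comp, comp_add, add_comp, comp_zero, zero_comp, add_zero,
      zero_add, comp_assoc, comp_comp_of_comp_eq_one hC,
      comp_comp_of_comp_eq_one hS₁, comp_comp_of_comp_eq_one hS₂, hC, hC', hS₁, hS₁', hS₂, hS₂',
      one_def, comp_id]
    abel

variable {N11 : H₁ →L[ℂ] H₁} {N12 : H₂ →L[ℂ] H₁} {N13 : H₃ →L[ℂ] H₁}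
  {N21 : H₁ →L[ℂ] H₂} {N22 : H₂ →L[ℂ] H₂} {N23 : H₃ →L[ℂ] H₂}
  {N31 : H₁ →L[ℂ] H₃} {N32 : H₂ →L[ℂ] H₃} {N33 : H₃ →L[ℂ] H₃}

lemma Pos3.injective_entry11_of_inv3 (hM : Pos3 A B X C D E)
    (hN : Inv3 A B X C D E N11 N12 N13 N21 N22 N23 N31 N32 N33) : Function.Injective N11 := by
  obtain ⟨-, -, -, ε, hε, hq⟩ := hM
  obtain ⟨e₁, -, -, e₄, -, -, e₇, -⟩ := hN
  refine (injective_iff_map_eq_zero N11).2 fun u hu => ?_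
  have col₁ : A (N11 u) + B (N21 u) + X (N31 u) = u := by simpa using congr($e₁ u)
  have col₂ : adjoint B (N11 u) + C (N21 u) + D (N31 u) = 0 := by simpa using congr($e₄ u)
  have col₃ : adjoint X (N11 u) + adjoint D (N21 u) + E (N31 u) = 0 := by
    simpa using congr($e₇ u)
  have hform : blockForm3 A B X C D E (N11 u) (N21 u) (N31 u) = 0 := by
    rw [blockForm3_eq_re_inner_apply, col₁, col₂, col₃, hu]
    simp
  have h := le_of_mul_le_mul_left ((hq (N11 u) (N21 u) (N31 u)).trans_eq
    (hform.trans (mul_zero ε).symm)) hε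
  rw [hu, norm_zero] at h
  have h₂₁ : N21 u = 0 := norm_eq_zero.1 <| (pow_eq_zero_iff two_ne_zero).1 <| by
    linarith [sq_nonneg ‖N21 u‖, sq_nonneg ‖N31 u‖]
  have h₃₁ : N31 u = 0 := norm_eq_zero.1 <| (pow_eq_zero_iff two_ne_zero).1 <| by
    linarith [sq_nonneg ‖N21 u‖, sq_nonneg ‖N31 u‖]
  rw [← col₁, hu, h₂₁, h₃₁]
  simp

lemma Inv3.entry11_comp_eq {C' : H₂ →L[ℂ] H₂} (hC : C ∘L C' = 1)
    (hN : Inv3 A B X C D E N11 N12 0 N21 N22 N23 N31 N32 N33) :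
    N11 ∘L X = N11 ∘L B ∘L C' ∘L D := by
  obtain ⟨-, -, -, -, -, -, -, -, -, -, e₁₂, e₁₃, -⟩ := hN
  rw [zero_comp, add_zero] at e₁₂ e₁₃
  have hN12 : N12 = -(N11 ∘L B ∘L C') := by
    calc N12 = N12 ∘L C ∘L C' := by rw [hC, one_def, comp_id]
      _ = _ := by rw [← comp_assoc, eq_neg_of_add_eq_zero_right e₁₂, neg_comp, comp_assoc]
  rw [hN12, neg_comp, ← sub_eq_add_neg, sub_eq_zero] at e₁₃
  simpa only [comp_assoc] using e₁₃

end BlockMatrix3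

theorem three_by_three_completion_unique
    (A : H₁ →L[ℂ] H₁) (B : H₂ →L[ℂ] H₁) (C : H₂ →L[ℂ] H₂)
    (D : H₃ →L[ℂ] H₂) (E : H₃ →L[ℂ] H₃)
    (h1 : Pos2 A B C) (h2 : Pos2 C D E) :
    GoodCompletion A B C D E (B ∘L Ring.inverse C ∘L D) ∧
      ∀ X : H₃ →L[ℂ] H₁, GoodCompletion A B C D E X → X = B ∘L Ring.inverse C ∘L D := by
  have hCu := h1.isUnit_right
  have hCC' : C ∘L Ring.inverse C = 1 := Ring.mul_inverse_cancel C hCu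
  have hS₁ := h1.isUnit_schur hCC'
  have hS₂ := h2.swap.isUnit_schur hCC'
  rw [adjoint_adjoint] at hS₂
  refine ⟨⟨pos3_of_pos2 h1 h2 hCC', _, _, _, _, _, _, _, _, _,
    inv3_of_schur hCC' (Ring.inverse_mul_cancel C hCu) h1.2.1.ringInverse
      (Ring.mul_inverse_cancel _ hS₁) (Ring.inverse_mul_cancel _ hS₁)
      (Ring.mul_inverse_cancel _ hS₂) (Ring.inverse_mul_cancel _ hS₂)
      (sub_add_cancel _ _).symm (sub_add_cancel _ _).symm, rfl⟩, ?_⟩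
  rintro X ⟨hM, N11, N12, N13, N21, N22, N23, N31, N32, N33, hN, rfl⟩
  ext z
  exact hM.injective_entry11_of_inv3 hN congr($(hN.entry11_comp_eq hCC') z)
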